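/- arXiv:2409.11713 — 7 statements merged into one kernel-verified Lean document; each statement's English description precedes it below -/
import Mathlib

section
/- Let V : [0,∞) → ℝ be a differentiable, nonnegative function satisfying V'(t) ≤ -c·V(t)^α for all t ≥ 0, where c > 0 and α ∈ (0,1). Then V(t) = 0 for all t ≥ T₀, where T₀ = V(0)^(1-α)/(c(1-α)). -/
theorem finite_time_scalar (V V' : ℝ → ℝ) (c α : ℝ) (hc : 0 < c) (hα0 : 0 < α) (hα1 : α < 1)
    (hdiff : ∀ t : ℝ, 0 ≤ t → HasDerivAt V (V' t) t)
    (hnonneg : ∀ t : ℝ, 0 ≤ t → 0 ≤ V t)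
    (hineq : ∀ t : ℝ, 0 ≤ t → V' t ≤ -c * (V t) ^ α) :
    ∀ t : ℝ, V 0 ^ (1 - α) / (c * (1 - α)) ≤ t → V t = 0 := by
  have h1α : (0:ℝ) < 1 - α := by linarith
  intro t ht
  have hT0 : (0:ℝ) ≤ V 0 ^ (1 - α) / (c * (1 - α)) :=
    div_nonneg (Real.rpow_nonneg (hnonneg 0 le_rfl) _) (by positivity)
  have ht0 : 0 ≤ t := le_trans hT0 ht
  by_contra hVt
  have hVtpos : 0 < V t := lt_of_le_of_ne (hnonneg t ht0) (Ne.symm hVt)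
  -- V is antitone on [0, t]
  have hIcc : Set.Icc (0:ℝ) t ⊆ Set.Ici (0:ℝ) := fun s hs => hs.1
  have hanti : AntitoneOn V (Set.Icc 0 t) := by
    apply antitoneOn_of_deriv_nonpos (convex_Icc 0 t)
    · intro s hs
      exact ((hdiff s hs.1).continuousAt).continuousWithinAt
    · intro s hs
      rw [interior_Icc] at hs
      exact ((hdiff s hs.1.le).differentiableAt).differentiableWithinAt
    · intro s hs
      rw [interior_Icc] at hs
      rw [(hdiff s hs.1.le).deriv]
      have := hineq s hs.1.le
      have h2 : 0 ≤ V s ^ α := Real.rpow_nonneg (hnonneg s hs.1.le) _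
      nlinarith
  have hVpos : ∀ s ∈ Set.Icc (0:ℝ) t, 0 < V s := fun s hs =>
    lt_of_lt_of_le hVtpos (hanti hs (Set.right_mem_Icc.2 ht0) hs.2)
  -- g s = V s ^ (1-α) + c (1-α) s is antitone on [0,t]
  set g : ℝ → ℝ := fun s => V s ^ (1 - α) + c * (1 - α) * s with hgdef
  have hg : ∀ s ∈ Set.Icc (0:ℝ) t,
      HasDerivAt g (V' s * (1 - α) * V s ^ (1 - α - 1) + c * (1 - α)) s := by
    intro s hs
    exact (((hdiff s hs.1).rpow_const (Or.inl (hVpos s hs).ne')).add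
      ((hasDerivAt_id s).const_mul (c * (1 - α)))).congr_deriv (by ring)
  have hg0 : ∀ s ∈ Set.Icc (0:ℝ) t,
      V' s * (1 - α) * V s ^ (1 - α - 1) + c * (1 - α) ≤ 0 := by
    intro s hs
    have hVs := hVpos s hs
    have hpow : V s ^ α * V s ^ (1 - α - 1) = 1 := by
      rw [← Real.rpow_add hVs]
      norm_num
    have h1 : V' s ≤ -c * V s ^ α := hineq s hs.1
    have h2 : 0 < V s ^ (1 - α - 1) := Real.rpow_pos_of_pos hVs _
    have h3 : V' s * V s ^ (1 - α - 1) ≤ -c := by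
      have h4 := mul_le_mul_of_nonneg_right h1 h2.le
      nlinarith [hpow]
    nlinarith [mul_le_mul_of_nonneg_left h3 h1α.le]
  have hganti : AntitoneOn g (Set.Icc 0 t) := by
    apply antitoneOn_of_deriv_nonpos (convex_Icc 0 t)
    · intro s hs; exact ((hg s hs).continuousAt).continuousWithinAt
    · intro s hs
      rw [interior_Icc] at hs
      exact ((hg s (Set.mem_Icc_of_Ioo hs)).differentiableAt).differentiableWithinAt
    · intro s hs
      rw [interior_Icc] at hs
      rw [(hg s (Set.mem_Icc_of_Ioo hs)).deriv]
      exact hg0 s (Set.mem_Icc_of_Ioo hs)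
  have hgt : g t ≤ g 0 := hganti (Set.left_mem_Icc.2 ht0) (Set.right_mem_Icc.2 ht0) ht0
  simp only [hgdef, mul_zero, add_zero] at hgt
  -- g t ≤ g 0 gives V t ^ (1-α) ≤ V 0 ^ (1-α) - c(1-α)t ≤ 0, contradiction
  have hVtp : 0 < V t ^ (1 - α) := Real.rpow_pos_of_pos hVtpos _
  have hct : V 0 ^ (1 - α) ≤ c * (1 - α) * t := by
    rw [div_le_iff₀ (by positivity)] at ht
    linarith [ht]
  linarith
end

section
/- Let V : [0,∞) → ℝ be a differentiable, nonnegative function satisfying V'(t) ≤ -c₁·V(t)^{α₁} - c₂·V(t)^{α₂} for all t ≥ 0, where c₁, c₂ > 0, α₁ ∈ (0,1), and α₂ > 1. Then V(t) = 0 for all t ≥ T̄, where T̄ = 1/(c₁(1-α₁)) + 1/(c₂(α₂-1)). In particular the bound T̄ is independent of V(0). -/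
/-!
Separation of variables: along a positive solution of `V' ≤ -c V^α` with `α ≠ 1`, the function
`V^(1-α)/(1-α) + c t` is nonincreasing. For `α₂ > 1` this makes `V^(1-α₂)` grow at rate at least
`c₂ (α₂ - 1)`, so whatever `V 0` is, `V ≤ 1` by time `T₂ = 1/(c₂(α₂-1))`. For `α₁ < 1` it makes
`V^(1-α₁)` decrease at rate at least `c₁ (1 - α₁)`, so from `V ≤ 1` the function reaches `0`
within a further time `T₁ = 1/(c₁(1-α₁))`.
-/

open Set Real

lemma antitoneOn_Icc_of_hasDerivAt_nonpos {f f' : ℝ → ℝ} {a b : ℝ}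
    (hf : ∀ t ∈ Icc a b, HasDerivAt f (f' t) t) (hf' : ∀ t ∈ Icc a b, f' t ≤ 0) :
    AntitoneOn f (Icc a b) :=
  antitoneOn_of_hasDerivWithinAt_nonpos (convex_Icc a b)
    (fun t ht => (hf t ht).continuousAt.continuousWithinAt)
    (fun t ht => (hf t (interior_subset ht)).hasDerivWithinAt)
    (fun t ht => hf' t (interior_subset ht))

section DifferentialInequality

variable {V V' : ℝ → ℝ} {a b c α : ℝ}

lemma antitoneOn_Icc_of_deriv_le_neg_rpow (hc : 0 ≤ c)
    (hd : ∀ t ∈ Icc a b, HasDerivAt V (V' t) t) (hnonneg : ∀ t ∈ Icc a b, 0 ≤ V t)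
    (hineq : ∀ t ∈ Icc a b, V' t ≤ -c * V t ^ α) :
    AntitoneOn V (Icc a b) :=
  antitoneOn_Icc_of_hasDerivAt_nonpos hd fun t ht => by
    have := rpow_nonneg (hnonneg t ht) α
    nlinarith [hineq t ht]

lemma antitoneOn_rpow_one_sub_div_add_mul (hα : α ≠ 1)
    (hd : ∀ t ∈ Icc a b, HasDerivAt V (V' t) t) (hpos : ∀ t ∈ Icc a b, 0 < V t)
    (hineq : ∀ t ∈ Icc a b, V' t ≤ -c * V t ^ α) :
    AntitoneOn (fun t => V t ^ (1 - α) / (1 - α) + c * t) (Icc a b) := by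
  refine antitoneOn_Icc_of_hasDerivAt_nonpos
    (fun t ht => (((hd t ht).rpow_const (Or.inl (hpos t ht).ne')).div_const (1 - α)).add
      ((hasDerivAt_id t).const_mul c)) fun t ht => ?_
  have hV := hpos t ht
  calc V' t * (1 - α) * V t ^ (1 - α - 1) / (1 - α) + c * 1
      = V t ^ (-α) * V' t + c := by rw [show 1 - α - 1 = -α by ring]; field_simp
    _ ≤ V t ^ (-α) * (-c * V t ^ α) + c := by gcongr; exact hineq t ht
    _ = 0 := by rw [rpow_neg hV.le]; field_simp; ring

lemma le_one_of_deriv_le_neg_rpow_of_one_lt (hα : 1 < α) (hc : 0 ≤ c) (hab : a ≤ b)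
    (hd : ∀ t ∈ Icc a b, HasDerivAt V (V' t) t) (hnonneg : ∀ t ∈ Icc a b, 0 ≤ V t)
    (hineq : ∀ t ∈ Icc a b, V' t ≤ -c * V t ^ α) (hb : 1 ≤ c * (α - 1) * (b - a)) :
    V b ≤ 1 := by
  by_contra! hVb
  have hpos : ∀ t ∈ Icc a b, 0 < V t := fun t ht => one_pos.trans <|
    hVb.trans_le (antitoneOn_Icc_of_deriv_le_neg_rpow hc hd hnonneg hineq ht ⟨hab, le_rfl⟩ ht.2)
  have key := antitoneOn_rpow_one_sub_div_add_mul hα.ne' hd hpos hineq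
    ⟨le_rfl, hab⟩ ⟨hab, le_rfl⟩ hab
  have hVa : 0 < V a ^ (1 - α) := rpow_pos_of_pos (hpos a ⟨le_rfl, hab⟩) _
  have hVb' : V b ^ (1 - α) < 1 := rpow_lt_one_of_one_lt_of_neg hVb (by linarith)
  have growth : V a ^ (1 - α) + c * (α - 1) * (b - a) ≤ V b ^ (1 - α) := by
    have h1α : 1 - α < 0 := by linarith
    simp only at key
    rw [div_add' _ _ _ h1α.ne, div_add' _ _ _ h1α.ne, div_le_div_right_of_neg h1α] at key
    linarith
  linarith

lemma eq_zero_of_deriv_le_neg_rpow_of_lt_one (hα : α < 1) (hc : 0 ≤ c) (hab : a ≤ b)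
    (hd : ∀ t ∈ Icc a b, HasDerivAt V (V' t) t) (hnonneg : ∀ t ∈ Icc a b, 0 ≤ V t)
    (hineq : ∀ t ∈ Icc a b, V' t ≤ -c * V t ^ α) (hb : V a ^ (1 - α) ≤ c * (1 - α) * (b - a)) :
    V b = 0 := by
  refine le_antisymm ?_ (hnonneg b ⟨hab, le_rfl⟩)
  by_contra! hVb
  have hpos : ∀ t ∈ Icc a b, 0 < V t := fun t ht =>
    hVb.trans_le (antitoneOn_Icc_of_deriv_le_neg_rpow hc hd hnonneg hineq ht ⟨hab, le_rfl⟩ ht.2)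
  have key := antitoneOn_rpow_one_sub_div_add_mul hα.ne hd hpos hineq
    ⟨le_rfl, hab⟩ ⟨hab, le_rfl⟩ hab
  have hVb' : 0 < V b ^ (1 - α) := rpow_pos_of_pos hVb _
  have decay : V b ^ (1 - α) + c * (1 - α) * (b - a) ≤ V a ^ (1 - α) := by
    have h1α : 0 < 1 - α := by linarith
    simp only at key
    rw [div_add' _ _ _ h1α.ne', div_add' _ _ _ h1α.ne', div_le_div_iff_of_pos_right h1α] at key
    linarith
  linarith

end DifferentialInequality
theorem fixed_time_scalar_general (V V' : ℝ → ℝ) (c₁ c₂ α₁ α₂ : ℝ) (hc₁ : 0 < c₁) (hc₂ : 0 < c₂)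
    (hα₁1 : α₁ < 1) (hα₂ : 1 < α₂)
    (hdiff : ∀ t : ℝ, 0 ≤ t → HasDerivAt V (V' t) t)
    (hnonneg : ∀ t : ℝ, 0 ≤ t → 0 ≤ V t)
    (hineq : ∀ t : ℝ, 0 ≤ t → V' t ≤ -c₁ * (V t) ^ α₁ - c₂ * (V t) ^ α₂) :
    ∀ t : ℝ, 1 / (c₁ * (1 - α₁)) + 1 / (c₂ * (α₂ - 1)) ≤ t → V t = 0 := by
  intro t ht
  set T₁ := 1 / (c₁ * (1 - α₁))
  set T₂ := 1 / (c₂ * (α₂ - 1))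
  have hk₁ : 0 < c₁ * (1 - α₁) := mul_pos hc₁ (sub_pos.2 hα₁1)
  have hk₂ : 0 < c₂ * (α₂ - 1) := mul_pos hc₂ (sub_pos.2 hα₂)
  have hT₁ : c₁ * (1 - α₁) * T₁ = 1 := mul_one_div_cancel hk₁.ne'
  have hT₂ : c₂ * (α₂ - 1) * T₂ = 1 := mul_one_div_cancel hk₂.ne'
  have hT₁0 : 0 ≤ T₁ := (one_div_pos.2 hk₁).le
  have hT₂0 : 0 ≤ T₂ := (one_div_pos.2 hk₂).le
  have hsub : ∀ s, 0 ≤ s → V' s ≤ -c₁ * V s ^ α₁ := fun s hs => by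
    nlinarith [hineq s hs, rpow_nonneg (hnonneg s hs) α₂]
  have hsup : ∀ s, 0 ≤ s → V' s ≤ -c₂ * V s ^ α₂ := fun s hs => by
    nlinarith [hineq s hs, rpow_nonneg (hnonneg s hs) α₁]
  have hVT₂ : V T₂ ≤ 1 :=
    le_one_of_deriv_le_neg_rpow_of_one_lt hα₂ hc₂.le hT₂0 (fun s hs => hdiff s hs.1)
      (fun s hs => hnonneg s hs.1) (fun s hs => hsup s hs.1) (by rw [sub_zero, hT₂])
  refine eq_zero_of_deriv_le_neg_rpow_of_lt_one hα₁1 hc₁.le (by linarith)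
    (fun s hs => hdiff s (hT₂0.trans hs.1)) (fun s hs => hnonneg s (hT₂0.trans hs.1))
    (fun s hs => hsub s (hT₂0.trans hs.1)) ?_
  calc V T₂ ^ (1 - α₁) ≤ 1 := rpow_le_one (hnonneg T₂ hT₂0) hVT₂ (by linarith)
    _ = c₁ * (1 - α₁) * T₁ := hT₁.symm
    _ ≤ c₁ * (1 - α₁) * (t - T₂) := by gcongr; linarith

theorem fixed_time_scalar (V V' : ℝ → ℝ) (c₁ c₂ α₁ α₂ : ℝ) (hc₁ : 0 < c₁) (hc₂ : 0 < c₂)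
    (hα₁0 : 0 < α₁) (hα₁1 : α₁ < 1) (hα₂ : 1 < α₂)
    (hdiff : ∀ t : ℝ, 0 ≤ t → HasDerivAt V (V' t) t)
    (hnonneg : ∀ t : ℝ, 0 ≤ t → 0 ≤ V t)
    (hineq : ∀ t : ℝ, 0 ≤ t → V' t ≤ -c₁ * (V t) ^ α₁ - c₂ * (V t) ^ α₂) :
    ∀ t : ℝ, 1 / (c₁ * (1 - α₁)) + 1 / (c₂ * (α₂ - 1)) ≤ t → V t = 0 :=
  fixed_time_scalar_general V V' c₁ c₂ α₁ α₂ hc₁ hc₂ hα₁1 hα₂ hdiff hnonneg hineq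
end

section
/- Let F : ℝⁿ → ℝⁿ be globally Lipschitz with constant L and F(0) = 0. Let V : ℝⁿ → ℝ be continuously differentiable with k₁‖x‖² ≤ V(x) ≤ k₂‖x‖² for all x, where k₁, k₂ > 0, and suppose ⟨∇V(x), F(x)⟩ ≤ -k₃‖x‖² for all x, where k₃ > 0. Fix η > 0 and λ ∈ (0,1), and define σ(x) = η‖F(x)‖^{-λ} when F(x) ≠ 0 and σ(x) = 0 otherwise. Then for every x with F(x) ≠ 0, ⟨∇V(x), σ(x)F(x)⟩ ≤ -c·V(x)^α, where α = 1 - λ/2 and c = k₃η/(L^λ k₂^α). -/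
/-!
Since `F 0 = 0`, the Lipschitz bound gives `‖F x‖ ≤ L ‖x‖`, so the scaling factor satisfies
`η ‖F x‖^(-λ) ≥ η L^(-λ) ‖x‖^(-λ)`. Multiplying the exponential decay `⟪∇V, F⟫ ≤ -k₃ ‖x‖²` by it
gives `⟪∇V, σ F⟫ ≤ -k₃ η L^(-λ) ‖x‖^(2-λ)`, and the upper bound `V ≤ k₂ ‖x‖²` raised to the power
`α = 1 - λ/2` turns `‖x‖^(2-λ)` into at least `V^α / k₂^α`.
-/

open scoped RealInnerProductSpace

namespace Real

theorem rpow_le_mul_rpow_two_mul_of_le_mul_sq {v k r α : ℝ} (hv : 0 ≤ v) (hk : 0 ≤ k)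
    (hr : 0 ≤ r) (hα : 0 ≤ α) (h : v ≤ k * r ^ 2) : v ^ α ≤ k ^ α * r ^ (2 * α) :=
  calc v ^ α ≤ (k * r ^ 2) ^ α := rpow_le_rpow hv h hα
    _ = k ^ α * r ^ (2 * α) := by
      rw [mul_rpow hk (sq_nonneg r), ← rpow_natCast_mul hr, Nat.cast_ofNat]

theorem rpow_neg_mul_rpow_sub_le_rpow_neg_mul_sq {s L r p : ℝ} (hs : 0 < s) (hL : 0 < L)
    (hr : 0 < r) (hp : 0 ≤ p) (hsr : s ≤ L * r) : L ^ (-p) * r ^ (2 - p) ≤ s ^ (-p) * r ^ 2 :=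
  calc L ^ (-p) * r ^ (2 - p) = (L * r) ^ (-p) * r ^ 2 := by
        rw [mul_rpow hL.le hr.le, sub_eq_neg_add, rpow_add hr, rpow_two]; ring
    _ ≤ s ^ (-p) * r ^ 2 :=
        mul_le_mul_of_nonneg_right (rpow_le_rpow_of_nonpos hs hsr (neg_nonpos.mpr hp))
          (sq_nonneg r)

end Real

theorem scaled_lyapunov_finite_time_general {n : ℕ}
    (F : EuclideanSpace ℝ (Fin n) → EuclideanSpace ℝ (Fin n))
    (V : EuclideanSpace ℝ (Fin n) → ℝ)
    (gradV : EuclideanSpace ℝ (Fin n) → EuclideanSpace ℝ (Fin n))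
    (L k₁ k₂ k₃ η lam : ℝ) (hL : 0 < L) (hk₁ : 0 < k₁) (hk₂ : 0 < k₂) (hk₃ : 0 < k₃)
    (hη : 0 < η) (hlam0 : 0 < lam) (hlam1 : lam < 1)
    (hLip : LipschitzWith L.toNNReal F) (hF0 : F 0 = 0)
    (hVlow : ∀ x, k₁ * ‖x‖ ^ 2 ≤ V x) (hVup : ∀ x, V x ≤ k₂ * ‖x‖ ^ 2)
    (hdec : ∀ x, ⟪gradV x, F x⟫ ≤ -k₃ * ‖x‖ ^ 2) :
    ∀ x, F x ≠ 0 →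
      ⟪gradV x, (η * ‖F x‖ ^ (-lam)) • F x⟫ ≤
        -(k₃ * η / (L ^ lam * k₂ ^ (1 - lam / 2))) * V x ^ (1 - lam / 2) := by
  intro x hFx
  have hx : 0 < ‖x‖ := norm_pos_iff.mpr fun h ↦ hFx (h ▸ hF0)
  have hFle : ‖F x‖ ≤ L * ‖x‖ := by
    simpa [Real.coe_toNNReal _ hL.le] using hLip.norm_le_mul hF0 x
  have hV : V x ^ (1 - lam / 2) ≤ k₂ ^ (1 - lam / 2) * ‖x‖ ^ (2 - lam) := by
    have hV0 : 0 ≤ V x := (by positivity : 0 ≤ k₁ * ‖x‖ ^ 2).trans (hVlow x)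
    have h := Real.rpow_le_mul_rpow_two_mul_of_le_mul_sq (α := 1 - lam / 2) hV0 hk₂.le hx.le
      (by linarith) (hVup x)
    rwa [show 2 * (1 - lam / 2) = 2 - lam by ring] at h
  calc ⟪gradV x, (η * ‖F x‖ ^ (-lam)) • F x⟫
      = η * (‖F x‖ ^ (-lam) * ⟪gradV x, F x⟫) := by rw [real_inner_smul_right, mul_assoc]
    _ ≤ η * (‖F x‖ ^ (-lam) * (-k₃ * ‖x‖ ^ 2)) := by gcongr; exact hdec x
    _ = -(k₃ * η) * (‖F x‖ ^ (-lam) * ‖x‖ ^ 2) := by ring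
    _ ≤ -(k₃ * η) * (L ^ (-lam) * ‖x‖ ^ (2 - lam)) :=
        mul_le_mul_of_nonpos_left (Real.rpow_neg_mul_rpow_sub_le_rpow_neg_mul_sq
          (norm_pos_iff.mpr hFx) hL hx hlam0.le hFle) (neg_nonpos.mpr (by positivity))
    _ = -(k₃ * η / (L ^ lam * k₂ ^ (1 - lam / 2))) * (k₂ ^ (1 - lam / 2) * ‖x‖ ^ (2 - lam)) := by
        rw [Real.rpow_neg hL.le]
        field_simp
    _ ≤ -(k₃ * η / (L ^ lam * k₂ ^ (1 - lam / 2))) * V x ^ (1 - lam / 2) :=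
        mul_le_mul_of_nonpos_left hV (neg_nonpos.mpr (by positivity))

theorem scaled_lyapunov_finite_time {n : ℕ}
    (F : EuclideanSpace ℝ (Fin n) → EuclideanSpace ℝ (Fin n))
    (V : EuclideanSpace ℝ (Fin n) → ℝ)
    (gradV : EuclideanSpace ℝ (Fin n) → EuclideanSpace ℝ (Fin n))
    (L k₁ k₂ k₃ η lam : ℝ) (hL : 0 < L) (hk₁ : 0 < k₁) (hk₂ : 0 < k₂) (hk₃ : 0 < k₃)
    (hη : 0 < η) (hlam0 : 0 < lam) (hlam1 : lam < 1)
    (hLip : LipschitzWith L.toNNReal F) (hF0 : F 0 = 0)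
    (hgrad : ∀ x, HasGradientAt V (gradV x) x)
    (hgradCont : Continuous gradV)
    (hVlow : ∀ x, k₁ * ‖x‖ ^ 2 ≤ V x) (hVup : ∀ x, V x ≤ k₂ * ‖x‖ ^ 2)
    (hdec : ∀ x, ⟪gradV x, F x⟫ ≤ -k₃ * ‖x‖ ^ 2) :
    ∀ x, F x ≠ 0 →
      ⟪gradV x, (η * ‖F x‖ ^ (-lam)) • F x⟫ ≤
        -(k₃ * η / (L ^ lam * k₂ ^ (1 - lam / 2))) * V x ^ (1 - lam / 2) :=
  scaled_lyapunov_finite_time_general F V gradV L k₁ k₂ k₃ η lam hL hk₁ hk₂ hk₃ hη hlam0 hlam1 hLip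
    hF0 hVlow hVup hdec
end

section
/- Let F : ℝⁿ → ℝⁿ be globally Lipschitz with constant L, F(0) = 0, and suppose ‖F(x)‖ ≥ m‖x‖^β for all x, where m, β > 0. Let V : ℝⁿ → ℝ be continuously differentiable with k₁‖x‖² ≤ V(x) ≤ k₂‖x‖² and ⟨∇V(x), F(x)⟩ ≤ -k₃‖x‖² for all x, where k₁, k₂, k₃ > 0. Fix η₁, η₂, λ₂ > 0 and λ₁ ∈ (0,1), and define σ(x) = η₁‖F(x)‖^{-λ₁} + η₂‖F(x)‖^{λ₂} when F(x) ≠ 0 and σ(x) = 0 otherwise. Then for all x with F(x) ≠ 0, ⟨∇V(x), σ(x)F(x)⟩ ≤ -c₁·V(x)^{α₁} - c₂·V(x)^{α₂}, where α₁ = 1 - λ₁/2, α₂ = 1 + βλ₂/2, c₁ = k₃η₁/(L^{λ₁} k₂^{α₁}), and c₂ = k₃η₂ m^{λ₂}/k₂^{α₂}. -/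
/-!
Since `σ(x) ≥ 0`, the decay condition gives `⟪∇V x, σ(x) F x⟫ ≤ -k₃ σ(x) ‖x‖²`. Both terms of
`σ(x)` are bounded below by powers of `‖x‖`: `‖F x‖ ^ (-λ₁) ≥ (L ‖x‖) ^ (-λ₁)` by the Lipschitz
bound and `‖F x‖ ^ λ₂ ≥ (m ‖x‖ ^ β) ^ λ₂`, while `V x ≤ k₂ ‖x‖²` turns the resulting powers
`‖x‖ ^ (2 α)` into `V x ^ α` up to the factor `k₂ ^ α`.
-/

open scoped RealInnerProductSpace

open Real

theorem mul_rpow_le_mul_sq_of_le_mul_sq {v k r α c d : ℝ} (hv : 0 ≤ v) (hk : 0 ≤ k) (hr : 0 < r)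
    (hα : 0 ≤ α) (hc : 0 ≤ c) (hvk : v ≤ k * r ^ 2) (hcd : c * k ^ α * r ^ (2 * α - 2) ≤ d) :
    c * v ^ α ≤ d * r ^ 2 := by
  have hsq : (r ^ 2) ^ α = r ^ (2 * α - 2) * r ^ 2 := by
    rw [← rpow_add_natCast hr.ne', ← rpow_natCast, ← rpow_mul hr.le]
    ring_nf
  calc c * v ^ α ≤ c * (k * r ^ 2) ^ α := mul_le_mul_of_nonneg_left (rpow_le_rpow hv hvk hα) hc
    _ = c * k ^ α * r ^ (2 * α - 2) * r ^ 2 := by rw [mul_rpow hk (by positivity), hsq]; ring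
    _ ≤ d * r ^ 2 := mul_le_mul_of_nonneg_right hcd (by positivity)

theorem scaled_lyapunov_fixed_time_general {n : ℕ}
    (F : EuclideanSpace ℝ (Fin n) → EuclideanSpace ℝ (Fin n))
    (V : EuclideanSpace ℝ (Fin n) → ℝ)
    (gradV : EuclideanSpace ℝ (Fin n) → EuclideanSpace ℝ (Fin n))
    (L m β k₁ k₂ k₃ η₁ η₂ lam₁ lam₂ : ℝ)
    (hL : 0 < L) (hm : 0 < m) (hβ : 0 < β)
    (hk₁ : 0 < k₁) (hk₂ : 0 < k₂) (hk₃ : 0 < k₃)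
    (hη₁ : 0 < η₁) (hη₂ : 0 < η₂) (hlam₂ : 0 < lam₂)
    (hlam₁0 : 0 < lam₁) (hlam₁1 : lam₁ < 1)
    (hLip : LipschitzWith L.toNNReal F) (hF0 : F 0 = 0)
    (hFlow : ∀ x, m * ‖x‖ ^ β ≤ ‖F x‖)
    (hVlow : ∀ x, k₁ * ‖x‖ ^ 2 ≤ V x) (hVup : ∀ x, V x ≤ k₂ * ‖x‖ ^ 2)
    (hdec : ∀ x, ⟪gradV x, F x⟫ ≤ -k₃ * ‖x‖ ^ 2) :
    ∀ x, F x ≠ 0 →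
      ⟪gradV x, (η₁ * ‖F x‖ ^ (-lam₁) + η₂ * ‖F x‖ ^ lam₂) • F x⟫ ≤
        -(k₃ * η₁ / (L ^ lam₁ * k₂ ^ (1 - lam₁ / 2))) * V x ^ (1 - lam₁ / 2)
        - (k₃ * η₂ * m ^ lam₂ / k₂ ^ (1 + β * lam₂ / 2)) * V x ^ (1 + β * lam₂ / 2) := by
  intro x hFx
  have hx : 0 < ‖x‖ := norm_pos_iff.mpr (by rintro rfl; exact hFx hF0)
  have hV : 0 ≤ V x := (by positivity : 0 ≤ k₁ * ‖x‖ ^ 2).trans (hVlow x)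
  have hFle : ‖F x‖ ≤ L * ‖x‖ := by
    simpa only [coe_toNNReal L hL.le] using hLip.norm_le_mul hF0 x
  have hterm₁ : k₃ * η₁ / (L ^ lam₁ * k₂ ^ (1 - lam₁ / 2)) * V x ^ (1 - lam₁ / 2) ≤
      k₃ * η₁ * ‖F x‖ ^ (-lam₁) * ‖x‖ ^ 2 := by
    refine mul_rpow_le_mul_sq_of_le_mul_sq hV hk₂.le hx (by linarith) (by positivity) (hVup x) ?_
    calc _ = k₃ * η₁ * (L * ‖x‖) ^ (-lam₁) := by
          rw [show 2 * (1 - lam₁ / 2) - 2 = -lam₁ by ring, mul_rpow hL.le hx.le, rpow_neg hL.le]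
          field_simp
      _ ≤ _ := mul_le_mul_of_nonneg_left
          (rpow_le_rpow_of_nonpos (norm_pos_iff.mpr hFx) hFle (by linarith)) (by positivity)
  have hterm₂ : k₃ * η₂ * m ^ lam₂ / k₂ ^ (1 + β * lam₂ / 2) * V x ^ (1 + β * lam₂ / 2) ≤
      k₃ * η₂ * ‖F x‖ ^ lam₂ * ‖x‖ ^ 2 := by
    refine mul_rpow_le_mul_sq_of_le_mul_sq hV hk₂.le hx (by positivity) (by positivity) (hVup x) ?_
    calc _ = k₃ * η₂ * (m * ‖x‖ ^ β) ^ lam₂ := by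
          rw [show 2 * (1 + β * lam₂ / 2) - 2 = β * lam₂ by ring, mul_rpow hm.le (by positivity),
            ← rpow_mul hx.le]
          field_simp
      _ ≤ _ := mul_le_mul_of_nonneg_left
          (rpow_le_rpow (by positivity) (hFlow x) hlam₂.le) (by positivity)
  rw [real_inner_smul_right]
  calc _ ≤ (η₁ * ‖F x‖ ^ (-lam₁) + η₂ * ‖F x‖ ^ lam₂) * (-k₃ * ‖x‖ ^ 2) :=
        mul_le_mul_of_nonneg_left (hdec x) (by positivity)
    _ ≤ _ := by linarith

theorem scaled_lyapunov_fixed_time {n : ℕ}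
    (F : EuclideanSpace ℝ (Fin n) → EuclideanSpace ℝ (Fin n))
    (V : EuclideanSpace ℝ (Fin n) → ℝ)
    (gradV : EuclideanSpace ℝ (Fin n) → EuclideanSpace ℝ (Fin n))
    (L m β k₁ k₂ k₃ η₁ η₂ lam₁ lam₂ : ℝ)
    (hL : 0 < L) (hm : 0 < m) (hβ : 0 < β)
    (hk₁ : 0 < k₁) (hk₂ : 0 < k₂) (hk₃ : 0 < k₃)
    (hη₁ : 0 < η₁) (hη₂ : 0 < η₂) (hlam₂ : 0 < lam₂)
    (hlam₁0 : 0 < lam₁) (hlam₁1 : lam₁ < 1)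
    (hLip : LipschitzWith L.toNNReal F) (hF0 : F 0 = 0)
    (hFlow : ∀ x, m * ‖x‖ ^ β ≤ ‖F x‖)
    (hgrad : ∀ x, HasGradientAt V (gradV x) x)
    (hgradCont : Continuous gradV)
    (hVlow : ∀ x, k₁ * ‖x‖ ^ 2 ≤ V x) (hVup : ∀ x, V x ≤ k₂ * ‖x‖ ^ 2)
    (hdec : ∀ x, ⟪gradV x, F x⟫ ≤ -k₃ * ‖x‖ ^ 2) :
    ∀ x, F x ≠ 0 →
      ⟪gradV x, (η₁ * ‖F x‖ ^ (-lam₁) + η₂ * ‖F x‖ ^ lam₂) • F x⟫ ≤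
        -(k₃ * η₁ / (L ^ lam₁ * k₂ ^ (1 - lam₁ / 2))) * V x ^ (1 - lam₁ / 2)
        - (k₃ * η₂ * m ^ lam₂ / k₂ ^ (1 + β * lam₂ / 2)) * V x ^ (1 + β * lam₂ / 2) :=
  scaled_lyapunov_fixed_time_general F V gradV L m β k₁ k₂ k₃ η₁ η₂ lam₁ lam₂ hL hm hβ hk₁ hk₂ hk₃
    hη₁ hη₂ hlam₂ hlam₁0 hlam₁1 hLip hF0 hFlow hVlow hVup hdec
end

section
/- Let V : [0,∞) → ℝ be differentiable and nonnegative with V'(t) ≤ -c·V(t)^{α} for all t ≥ 0, where c > 0 and α > 1, and suppose V(0) ≥ 1. Then V(t) ≤ 1 for all t ≥ 1/(c(α-1)). -/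
/-! Since `V' ≤ -c V^α ≤ 0`, `V` is nonincreasing, so `V t > 1` would force `V > 1` on `[0, t]`.
There `(V^(1-α))' = (1-α) V^(-α) V' ≥ c (α-1)`, hence `V t ^ (1-α) > c (α-1) t ≥ 1`,
which contradicts `V t > 1` because `1 - α < 0`. -/

open Set

lemma mul_sub_one_le_mul_rpow_of_le_neg_mul_rpow {v v' c α : ℝ} (hv : 0 < v) (hα : 1 ≤ α)
    (h : v' ≤ -c * v ^ α) : c * (α - 1) ≤ v' * (1 - α) * v ^ (1 - α - 1) := by
  have hvα : 0 < v ^ α := Real.rpow_pos_of_pos hv α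
  calc c * (α - 1) = -c * v ^ α * (1 - α) * (v ^ α)⁻¹ := by field_simp; ring
    _ ≤ v' * (1 - α) * (v ^ α)⁻¹ :=
      mul_le_mul_of_nonneg_right (mul_le_mul_of_nonpos_right h (by linarith)) (inv_pos.2 hvα).le
    _ = v' * (1 - α) * v ^ (1 - α - 1) := by
      rw [sub_sub_cancel_left, Real.rpow_neg hv.le]

lemma rpow_one_sub_add_le_of_hasDerivAt_le_neg_mul_rpow {V V' : ℝ → ℝ} {c α a b : ℝ}
    (hα : 1 ≤ α) (hab : a ≤ b) (hV : ∀ s ∈ Icc a b, HasDerivAt V (V' s) s)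
    (hpos : ∀ s ∈ Icc a b, 0 < V s) (hineq : ∀ s ∈ Icc a b, V' s ≤ -c * V s ^ α) :
    V a ^ (1 - α) + c * (α - 1) * (b - a) ≤ V b ^ (1 - α) := by
  set g : ℝ → ℝ := fun s => V s ^ (1 - α) - c * (α - 1) * s
  have hg : ∀ s ∈ Icc a b,
      HasDerivAt g (V' s * (1 - α) * V s ^ (1 - α - 1) - c * (α - 1) * 1) s := fun s hs =>
    ((hV s hs).rpow_const (Or.inl (hpos s hs).ne')).sub ((hasDerivAt_id s).const_mul _)
  have hmono : MonotoneOn g (Icc a b) :=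
    monotoneOn_of_hasDerivWithinAt_nonneg (convex_Icc a b)
      (fun s hs => (hg s hs).continuousAt.continuousWithinAt)
      (fun s hs => (hg s (interior_subset hs)).hasDerivWithinAt)
      (fun s hs => by
        have hs' := interior_subset hs
        linarith [mul_sub_one_le_mul_rpow_of_le_neg_mul_rpow (hpos s hs') hα (hineq s hs')])
  have := hmono (left_mem_Icc.2 hab) (right_mem_Icc.2 hab) hab
  simp only [g] at this
  linarith

theorem superlinear_phase_general (V V' : ℝ → ℝ) (c α : ℝ) (hc : 0 < c) (hα : 1 < α)
    (hdiff : ∀ t : ℝ, 0 ≤ t → HasDerivAt V (V' t) t)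
    (hnonneg : ∀ t : ℝ, 0 ≤ t → 0 ≤ V t)
    (hineq : ∀ t : ℝ, 0 ≤ t → V' t ≤ -c * (V t) ^ α) :
    ∀ t : ℝ, 1 / (c * (α - 1)) ≤ t → V t ≤ 1 := by
  intro t ht
  have hca : 0 < c * (α - 1) := mul_pos hc (sub_pos.2 hα)
  have ht0 : 0 ≤ t := (one_div_pos.2 hca).le.trans ht
  have hanti : AntitoneOn V (Ici 0) :=
    antitoneOn_of_hasDerivWithinAt_nonpos (convex_Ici 0)
      (fun s hs => (hdiff s hs).continuousAt.continuousWithinAt)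
      (fun s hs => (hdiff s (interior_subset hs)).hasDerivWithinAt)
      (fun s hs => by
        have hs' : (0 : ℝ) ≤ s := interior_subset hs
        nlinarith [hineq s hs', Real.rpow_nonneg (hnonneg s hs') α])
  by_contra! hVt
  have hbig : ∀ s ∈ Icc 0 t, 1 < V s := fun s hs => hVt.trans_le (hanti hs.1 ht0 hs.2)
  have hgrowth := rpow_one_sub_add_le_of_hasDerivAt_le_neg_mul_rpow hα.le ht0
    (fun s hs => hdiff s hs.1) (fun s hs => one_pos.trans (hbig s hs)) (fun s hs => hineq s hs.1)
  have hV0 : 0 < V 0 ^ (1 - α) := Real.rpow_pos_of_pos (one_pos.trans (hbig 0 ⟨le_rfl, ht0⟩)) _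
  have hct : 1 ≤ c * (α - 1) * t := by rwa [div_le_iff₀ hca, mul_comm] at ht
  have hVt' : V t ^ (1 - α) < 1 := Real.rpow_lt_one_of_one_lt_of_neg hVt (by linarith)
  linarith

theorem superlinear_phase (V V' : ℝ → ℝ) (c α : ℝ) (hc : 0 < c) (hα : 1 < α)
    (hdiff : ∀ t : ℝ, 0 ≤ t → HasDerivAt V (V' t) t)
    (hnonneg : ∀ t : ℝ, 0 ≤ t → 0 ≤ V t)
    (hineq : ∀ t : ℝ, 0 ≤ t → V' t ≤ -c * (V t) ^ α)
    (hV0 : 1 ≤ V 0) :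
    ∀ t : ℝ, 1 / (c * (α - 1)) ≤ t → V t ≤ 1 :=
  superlinear_phase_general V V' c α hc hα hdiff hnonneg hineq
end

section
/- Let f : ℝⁿ → ℝ be m-strongly convex and differentiable with L-Lipschitz gradient, with minimizer x*. Fix η₁, η₂, λ₂ > 0 and λ₁ ∈ (0,1). Define the scaled gradient flow vector field G(x) = -(η₁‖∇f(x)‖^{-λ₁} + η₂‖∇f(x)‖^{λ₂})∇f(x) for x ≠ x* and G(x*) = 0. Then for V(x) = ½‖x - x*‖² and all x ≠ x*: ⟨x - x*, G(x)⟩ ≤ -(η₁ m/L^{λ₁})‖x - x*‖^{2-λ₁} - η₂ m^{1+λ₂}‖x - x*‖^{2+λ₂}, i.e. V̇ ≤ -c₁ V^{1-λ₁/2} - c₂ V^{1+λ₂/2} with c₁ = η₁ m 2^{1-λ₁/2}/L^{λ₁} and c₂ = η₂ m^{1+λ₂} 2^{1+λ₂/2}. -/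
open scoped RealInnerProductSpace

/-!
Adding the strong convexity inequality at `(x, x*)` and at `(x*, x)` gives
`⟪∇f x, x - x*⟫ ≥ m ‖x - x*‖²` (as `∇f x* = 0`), hence `‖∇f x‖ ≥ m ‖x - x*‖` by Cauchy–Schwarz,
while the Lipschitz bound gives `‖∇f x‖ ≤ L ‖x - x*‖`. The negative power `‖∇f x‖^(-λ₁)` is bounded
below using the upper bound on `‖∇f x‖` and the positive power `‖∇f x‖^λ₂` using the lower one.
The second inequality is the first rewritten in terms of `V = ½ ‖x - x*‖²`.
-/

section

variable {E : Type*} [NormedAddCommGroup E] [InnerProductSpace ℝ E]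

theorem IsLocalMin.hasGradientAt_eq_zero [CompleteSpace E] {f : E → ℝ} {g x : E}
    (hmin : IsLocalMin f x) (hf : HasGradientAt f g x) : g = 0 := by
  simpa using hmin.hasFDerivAt_eq_zero hf.hasFDerivAt

theorem mul_norm_sub_sq_le_inner_sub {f : E → ℝ} {gradf : E → E} {m : ℝ}
    (hstrong : ∀ x y, f x + ⟪gradf x, y - x⟫ + m / 2 * ‖y - x‖ ^ 2 ≤ f y) (x y : E) :
    m * ‖x - y‖ ^ 2 ≤ ⟪gradf x - gradf y, x - y⟫ := by
  have hxy := hstrong x y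
  have hyx := hstrong y x
  rw [norm_sub_rev, ← neg_sub x y, inner_neg_right] at hxy
  rw [inner_sub_left]
  linarith

theorem mul_norm_le_norm_of_mul_norm_sq_le_inner {m : ℝ} {g d : E}
    (h : m * ‖d‖ ^ 2 ≤ ⟪g, d⟫) : m * ‖d‖ ≤ ‖g‖ := by
  rcases (norm_nonneg d).eq_or_lt with hd | hd
  · simp [← hd]
  · have : m * ‖d‖ * ‖d‖ ≤ ‖g‖ * ‖d‖ := by
      nlinarith [real_inner_le_norm g d]
    exact le_of_mul_le_mul_right this hd

theorem inner_neg_scaled_smul_le {m L η₁ η₂ lam₁ lam₂ : ℝ} (hm : 0 < m) (hL : 0 < L)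
    (hη₁ : 0 ≤ η₁) (hη₂ : 0 ≤ η₂) (hlam₁ : 0 < lam₁) (hlam₂ : 0 < lam₂) {g d : E} (hd : d ≠ 0)
    (hinner : m * ‖d‖ ^ 2 ≤ ⟪g, d⟫) (hnorm : ‖g‖ ≤ L * ‖d‖) :
    ⟪d, -((η₁ * ‖g‖ ^ (-lam₁) + η₂ * ‖g‖ ^ lam₂) • g)⟫ ≤
      -(η₁ * m / L ^ lam₁) * ‖d‖ ^ (2 - lam₁) - η₂ * m ^ (1 + lam₂) * ‖d‖ ^ (2 + lam₂) := by
  set r := ‖d‖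
  have hr : 0 < r := norm_pos_iff.mpr hd
  have hgr : m * r ≤ ‖g‖ := mul_norm_le_norm_of_mul_norm_sq_le_inner hinner
  have hg : 0 < ‖g‖ := (mul_pos hm hr).trans_le hgr
  have hsmall : (L * r) ^ (-lam₁) ≤ ‖g‖ ^ (-lam₁) :=
    Real.rpow_le_rpow_of_nonpos hg hnorm (neg_nonpos.mpr hlam₁.le)
  have hlarge : (m * r) ^ lam₂ ≤ ‖g‖ ^ lam₂ := Real.rpow_le_rpow (by positivity) hgr hlam₂.le
  have hr2 : r ^ 2 = r ^ (2 : ℝ) := (Real.rpow_natCast r 2).symm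
  calc ⟪d, -((η₁ * ‖g‖ ^ (-lam₁) + η₂ * ‖g‖ ^ lam₂) • g)⟫
      = -((η₁ * ‖g‖ ^ (-lam₁) + η₂ * ‖g‖ ^ lam₂) * ⟪g, d⟫) := by
        rw [inner_neg_right, real_inner_smul_right, real_inner_comm]
    _ ≤ -((η₁ * (L * r) ^ (-lam₁) + η₂ * (m * r) ^ lam₂) * (m * r ^ 2)) := by
        gcongr
    _ = -(η₁ * m / L ^ lam₁) * r ^ (2 - lam₁) - η₂ * m ^ (1 + lam₂) * r ^ (2 + lam₂) := by
        rw [Real.mul_rpow hL.le hr.le, Real.mul_rpow hm.le hr.le, Real.rpow_neg hL.le,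
          Real.rpow_neg hr.le, Real.rpow_sub hr, Real.rpow_add hr, Real.rpow_add hm, Real.rpow_one,
          hr2]
        field_simp
        ring

end

theorem two_rpow_mul_half_mul_sq_rpow {r e k : ℝ} (hr : 0 ≤ r) (hk : 2 * e = k) :
    (2 : ℝ) ^ e * (1 / 2 * r ^ 2) ^ e = r ^ k := by
  rw [← Real.mul_rpow (by norm_num) (by positivity), ← mul_assoc, mul_one_div_cancel two_ne_zero,
    one_mul, ← hk, Real.rpow_mul hr]
  norm_cast

theorem strongly_convex_scaled_gradient_flow_fixed_general {n : ℕ}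
    (f : EuclideanSpace ℝ (Fin n) → ℝ)
    (gradf : EuclideanSpace ℝ (Fin n) → EuclideanSpace ℝ (Fin n))
    (m L η₁ η₂ lam₁ lam₂ : ℝ) (hm : 0 < m) (hL : 0 < L)
    (hη₁ : 0 < η₁) (hη₂ : 0 < η₂) (hlam₂ : 0 < lam₂) (hlam₁0 : 0 < lam₁)
    (hgrad : ∀ x, HasGradientAt f (gradf x) x)
    (hstrong : ∀ x y, f x + ⟪gradf x, y - x⟫ + m / 2 * ‖y - x‖ ^ 2 ≤ f y)
    (hgradLip : LipschitzWith L.toNNReal gradf)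
    (xstar : EuclideanSpace ℝ (Fin n)) (hmin : ∀ y, f xstar ≤ f y)
    (G : EuclideanSpace ℝ (Fin n) → EuclideanSpace ℝ (Fin n))
    (hG : ∀ x, x ≠ xstar →
      G x = -((η₁ * ‖gradf x‖ ^ (-lam₁) + η₂ * ‖gradf x‖ ^ lam₂) • gradf x)) :
    ∀ x, x ≠ xstar →
      ⟪x - xstar, G x⟫ ≤
          -(η₁ * m / L ^ lam₁) * ‖x - xstar‖ ^ (2 - lam₁)
          - η₂ * m ^ (1 + lam₂) * ‖x - xstar‖ ^ (2 + lam₂) ∧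
      ⟪x - xstar, G x⟫ ≤
          -(η₁ * m * 2 ^ (1 - lam₁ / 2) / L ^ lam₁) * ((1 : ℝ) / 2 * ‖x - xstar‖ ^ 2) ^ (1 - lam₁ / 2)
          - (η₂ * m ^ (1 + lam₂) * 2 ^ (1 + lam₂ / 2)) * ((1 : ℝ) / 2 * ‖x - xstar‖ ^ 2) ^ (1 + lam₂ / 2) := by
  intro x hx
  have hgstar : gradf xstar = 0 :=
    (isMinOn_univ_iff.mpr hmin).isLocalMin Filter.univ_mem |>.hasGradientAt_eq_zero (hgrad xstar)
  have hinner : m * ‖x - xstar‖ ^ 2 ≤ ⟪gradf x, x - xstar⟫ := by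
    simpa [hgstar] using mul_norm_sub_sq_le_inner_sub hstrong x xstar
  have hnorm : ‖gradf x‖ ≤ L * ‖x - xstar‖ := by
    simpa [hgstar, dist_eq_norm, hL.le] using hgradLip.dist_le_mul x xstar
  have hfirst := hG x hx ▸ inner_neg_scaled_smul_le hm hL hη₁.le hη₂.le hlam₁0 hlam₂
    (sub_ne_zero.mpr hx) hinner hnorm
  refine ⟨hfirst, ?_⟩
  rw [← two_rpow_mul_half_mul_sq_rpow (norm_nonneg _) (by ring : 2 * (1 - lam₁ / 2) = 2 - lam₁),
    ← two_rpow_mul_half_mul_sq_rpow (norm_nonneg _) (by ring : 2 * (1 + lam₂ / 2) = 2 + lam₂)]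
    at hfirst
  linear_combination hfirst

theorem strongly_convex_scaled_gradient_flow_fixed {n : ℕ}
    (f : EuclideanSpace ℝ (Fin n) → ℝ)
    (gradf : EuclideanSpace ℝ (Fin n) → EuclideanSpace ℝ (Fin n))
    (m L η₁ η₂ lam₁ lam₂ : ℝ) (hm : 0 < m) (hL : 0 < L)
    (hη₁ : 0 < η₁) (hη₂ : 0 < η₂) (hlam₂ : 0 < lam₂) (hlam₁0 : 0 < lam₁) (hlam₁1 : lam₁ < 1)
    (hgrad : ∀ x, HasGradientAt f (gradf x) x)
    (hstrong : ∀ x y, f x + ⟪gradf x, y - x⟫ + m / 2 * ‖y - x‖ ^ 2 ≤ f y)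
    (hgradLip : LipschitzWith L.toNNReal gradf)
    (xstar : EuclideanSpace ℝ (Fin n)) (hmin : ∀ y, f xstar ≤ f y)
    (G : EuclideanSpace ℝ (Fin n) → EuclideanSpace ℝ (Fin n))
    (hGstar : G xstar = 0)
    (hG : ∀ x, x ≠ xstar →
      G x = -((η₁ * ‖gradf x‖ ^ (-lam₁) + η₂ * ‖gradf x‖ ^ lam₂) • gradf x)) :
    ∀ x, x ≠ xstar →
      ⟪x - xstar, G x⟫ ≤
          -(η₁ * m / L ^ lam₁) * ‖x - xstar‖ ^ (2 - lam₁)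
          - η₂ * m ^ (1 + lam₂) * ‖x - xstar‖ ^ (2 + lam₂) ∧
      ⟪x - xstar, G x⟫ ≤
          -(η₁ * m * 2 ^ (1 - lam₁ / 2) / L ^ lam₁) * ((1 : ℝ) / 2 * ‖x - xstar‖ ^ 2) ^ (1 - lam₁ / 2)
          - (η₂ * m ^ (1 + lam₂) * 2 ^ (1 + lam₂ / 2)) * ((1 : ℝ) / 2 * ‖x - xstar‖ ^ 2) ^ (1 + lam₂ / 2) :=
  strongly_convex_scaled_gradient_flow_fixed_general f gradf m L η₁ η₂ lam₁ lam₂ hm hL hη₁ hη₂ hlam₂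
    hlam₁0 hgrad hstrong hgradLip xstar hmin G hG
end

section
/- Let c₁, c₂ > 0, α₁ ∈ (0,1), α₂ > 1. Then for every v ≥ 0, c₁ v^{α₁} + c₂ v^{α₂} ≥ min(c₁, c₂) · max(v^{α₁}, v^{α₂}), and consequently the solution of the comparison ODE v' = -c₁ v^{α₁} - c₂ v^{α₂}, v(0) = v₀ > 0, reaches zero at a time T(v₀) satisfying T(v₀) ≤ 1/(c₁(1-α₁)) + 1/(c₂(α₂-1)) for every v₀ > 0. -/
/-!
Separation of variables: while `v > 0` and `v' ≤ -c v ^ α` with `α ≠ 1`, the quantity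
`v ^ (1 - α) / (1 - α) + c t` is nonincreasing. For `α₂ > 1` this bounds the time spent
above `1` by `1 / (c₂ (α₂ - 1))` whatever `v₀` is, since `v ^ (1 - α₂)` stays in `(0, 1)`
there; for `α₁ < 1` it bounds the time needed to go from `v ≤ 1` to `0` by
`1 / (c₁ (1 - α₁))`.
-/

open Set

theorem min_mul_max_le_mul_add_mul {R : Type*} [Semiring R] [LinearOrder R] [IsOrderedRing R]
    {a b x y : R} (ha : 0 ≤ a) (hb : 0 ≤ b) (hx : 0 ≤ x) (hy : 0 ≤ y) :
    min a b * max x y ≤ a * x + b * y := by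
  rcases le_total x y with hxy | hyx
  · calc min a b * max x y = min a b * y := by rw [max_eq_right hxy]
      _ ≤ b * y := by gcongr; exact min_le_right a b
      _ ≤ a * x + b * y := le_add_of_nonneg_left (mul_nonneg ha hx)
  · calc min a b * max x y = min a b * x := by rw [max_eq_left hyx]
      _ ≤ a * x := by gcongr; exact min_le_left a b
      _ ≤ a * x + b * y := le_add_of_nonneg_right (mul_nonneg hb hy)

section SeparationOfVariables

variable {f f' : ℝ → ℝ} {c α : ℝ}

theorem antitoneOn_rpow_one_sub_div_add_mul_s19 {s : Set ℝ} (hs : Convex ℝ s) (hα : α ≠ 1)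
    (hpos : ∀ t ∈ s, 0 < f t) (hf : ∀ t ∈ s, HasDerivAt f (f' t) t)
    (hf' : ∀ t ∈ s, f' t ≤ -c * f t ^ α) :
    AntitoneOn (fun t => f t ^ (1 - α) / (1 - α) + c * t) s := by
  have hderiv : ∀ t ∈ s, HasDerivAt (fun t => f t ^ (1 - α) / (1 - α) + c * t)
      (f t ^ (-α) * f' t + c) t := by
    intro t ht
    refine ((((hf t ht).rpow_const (Or.inl (hpos t ht).ne')).div_const (1 - α)).add
      ((hasDerivAt_id' t).const_mul c)).congr_deriv ?_
    rw [sub_sub_cancel_left]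
    field_simp
  refine antitoneOn_of_hasDerivWithinAt_nonpos hs
    (fun t ht => (hderiv t ht).continuousAt.continuousWithinAt)
    (fun t ht => (hderiv t (interior_subset ht)).hasDerivWithinAt) fun t ht => ?_
  have ht := interior_subset ht
  have hrpow : f t ^ (-α) * f t ^ α = 1 := by
    rw [← Real.rpow_add (hpos t ht), neg_add_cancel, Real.rpow_zero]
  calc f t ^ (-α) * f' t + c ≤ f t ^ (-α) * (-c * f t ^ α) + c := by
        gcongr
        · exact (Real.rpow_pos_of_pos (hpos t ht) _).le
        · exact hf' t ht
    _ = 0 := by linear_combination (-c) * hrpow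

theorem exists_le_one_of_hasDerivAt_le_neg_rpow (hα : 1 < α) (hc : 0 < c) {a : ℝ}
    (hf : ∀ t ≥ a, HasDerivAt f (f' t) t)
    (hf' : ∀ t ≥ a, 1 < f t → f' t ≤ -c * f t ^ α) :
    ∃ t ∈ Icc a (a + 1 / (c * (α - 1))), f t ≤ 1 := by
  by_contra! hcon
  set b := a + 1 / (c * (α - 1))
  have hab : a ≤ b := le_add_of_nonneg_right (by have := sub_pos.2 hα; positivity)
  have hanti := antitoneOn_rpow_one_sub_div_add_mul_s19 (convex_Icc a b) hα.ne'
    (fun t ht => one_pos.trans (hcon t ht)) (fun t ht => hf t ht.1)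
    (fun t ht => hf' t ht.1 (hcon t ht)) (left_mem_Icc.2 hab) (right_mem_Icc.2 hab) hab
  have hfb : f b ^ (1 - α) < 1 :=
    Real.rpow_lt_one_of_one_lt_of_neg (hcon b (right_mem_Icc.2 hab)) (by linarith)
  have hfa : 0 < f a ^ (1 - α) :=
    Real.rpow_pos_of_pos (one_pos.trans (hcon a (left_mem_Icc.2 hab))) _
  have hb : c * (α - 1) * (b - a) = 1 := by
    simp only [b, add_sub_cancel_left]
    field_simp [(sub_pos.2 hα).ne']
  have hdrop : (f b ^ (1 - α) - f a ^ (1 - α)) / (1 - α) ≤ -(c * (b - a)) := by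
    rw [sub_div]; linarith [hanti]
  rw [div_le_iff_of_neg (by linarith)] at hdrop
  linarith

theorem exists_eq_zero_of_hasDerivAt_le_neg_rpow (hα : α < 1) (hc : 0 < c) {a : ℝ}
    (hnn : ∀ t ≥ a, 0 ≤ f t) (hf : ∀ t ≥ a, HasDerivAt f (f' t) t)
    (hf' : ∀ t ≥ a, 0 < f t → f' t ≤ -c * f t ^ α) :
    ∃ T ∈ Icc a (a + f a ^ (1 - α) / (c * (1 - α))), f T = 0 := by
  by_contra! hcon
  set b := a + f a ^ (1 - α) / (c * (1 - α))
  have hpos : ∀ t ∈ Icc a b, 0 < f t := fun t ht => (hnn t ht.1).lt_of_ne' (hcon t ht)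
  have hab : a ≤ b := le_add_of_nonneg_right <|
    div_nonneg (Real.rpow_nonneg (hnn a le_rfl) _) (by have := sub_pos.2 hα; positivity)
  have hanti := antitoneOn_rpow_one_sub_div_add_mul_s19 (convex_Icc a b) hα.ne hpos
    (fun t ht => hf t ht.1) (fun t ht => hf' t ht.1 (hpos t ht))
    (left_mem_Icc.2 hab) (right_mem_Icc.2 hab) hab
  have hfb : 0 < f b ^ (1 - α) := Real.rpow_pos_of_pos (hpos b (right_mem_Icc.2 hab)) _
  have hb : c * (1 - α) * (b - a) = f a ^ (1 - α) := by
    simp only [b, add_sub_cancel_left]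
    field_simp [(sub_pos.2 hα).ne']
  have hdrop : (f b ^ (1 - α) - f a ^ (1 - α)) / (1 - α) ≤ -(c * (b - a)) := by
    rw [sub_div]; linarith [hanti]
  rw [div_le_iff₀ (by linarith)] at hdrop
  linarith

end SeparationOfVariables

theorem fixed_time_comparison_general (c₁ c₂ α₁ α₂ : ℝ) (hc₁ : 0 < c₁) (hc₂ : 0 < c₂)
    (hα₁1 : α₁ < 1) (hα₂ : 1 < α₂) :
    (∀ v : ℝ, 0 ≤ v → min c₁ c₂ * max (v ^ α₁) (v ^ α₂) ≤ c₁ * v ^ α₁ + c₂ * v ^ α₂) ∧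
    (∀ v₀ : ℝ, 0 < v₀ → ∀ v : ℝ → ℝ, v 0 = v₀ →
      (∀ t : ℝ, 0 ≤ t → 0 ≤ v t) →
      (∀ t : ℝ, 0 ≤ t → HasDerivAt v (-(c₁ * (v t) ^ α₁) - c₂ * (v t) ^ α₂) t) →
      ∃ T : ℝ, 0 ≤ T ∧ T ≤ 1 / (c₁ * (1 - α₁)) + 1 / (c₂ * (α₂ - 1)) ∧ v T = 0) := by
  refine ⟨fun v hv => min_mul_max_le_mul_add_mul hc₁.le hc₂.le
    (Real.rpow_nonneg hv _) (Real.rpow_nonneg hv _), fun v₀ _ v _ hnn hder => ?_⟩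
  have hterm₁ t (ht : 0 ≤ t) : 0 ≤ c₁ * v t ^ α₁ :=
    mul_nonneg hc₁.le (Real.rpow_nonneg (hnn t ht) _)
  have hterm₂ t (ht : 0 ≤ t) : 0 ≤ c₂ * v t ^ α₂ :=
    mul_nonneg hc₂.le (Real.rpow_nonneg (hnn t ht) _)
  obtain ⟨t₁, ⟨ht₁, ht₁_le⟩, hvt₁⟩ :=
    exists_le_one_of_hasDerivAt_le_neg_rpow hα₂ hc₂ hder fun t ht _ => by
      linarith [hterm₁ t ht]
  obtain ⟨T, ⟨hT, hT_le⟩, hvT⟩ := exists_eq_zero_of_hasDerivAt_le_neg_rpow hα₁1 hc₁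
    (fun t ht => hnn t (ht₁.trans ht)) (fun t ht => hder t (ht₁.trans ht))
    fun t ht _ => by linarith [hterm₂ t (ht₁.trans ht)]
  have hvt₁_pow : v t₁ ^ (1 - α₁) ≤ 1 :=
    Real.rpow_le_one (hnn t₁ ht₁) hvt₁ (by linarith)
  refine ⟨T, ht₁.trans hT, ?_, hvT⟩
  calc T ≤ t₁ + v t₁ ^ (1 - α₁) / (c₁ * (1 - α₁)) := hT_le
    _ ≤ 1 / (c₂ * (α₂ - 1)) + 1 / (c₁ * (1 - α₁)) := by
      gcongr
      linarith
    _ = _ := add_comm _ _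

theorem fixed_time_comparison (c₁ c₂ α₁ α₂ : ℝ) (hc₁ : 0 < c₁) (hc₂ : 0 < c₂)
    (hα₁0 : 0 < α₁) (hα₁1 : α₁ < 1) (hα₂ : 1 < α₂) :
    (∀ v : ℝ, 0 ≤ v → min c₁ c₂ * max (v ^ α₁) (v ^ α₂) ≤ c₁ * v ^ α₁ + c₂ * v ^ α₂) ∧
    (∀ v₀ : ℝ, 0 < v₀ → ∀ v : ℝ → ℝ, v 0 = v₀ →
      (∀ t : ℝ, 0 ≤ t → 0 ≤ v t) →
      (∀ t : ℝ, 0 ≤ t → HasDerivAt v (-(c₁ * (v t) ^ α₁) - c₂ * (v t) ^ α₂) t) →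
      ∃ T : ℝ, 0 ≤ T ∧ T ≤ 1 / (c₁ * (1 - α₁)) + 1 / (c₂ * (α₂ - 1)) ∧ v T = 0) :=
  fixed_time_comparison_general c₁ c₂ α₁ α₂ hc₁ hc₂ hα₁1 hα₂
end
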